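/- Let $\hat{\theta}:\mathscr{X}^n\to\Theta$ be an estimator, $l:\Theta\times\Theta\to[0,\infty)$ a loss function, $\mathbf{P},\mathbf{Q}$ two probability distributions on a measurable space, and $\beta\in(0,1]$. Suppose that for all $\xi>0$, $\mathbb{P}_{\mathbf{X}\sim\mathbf{P}}\big( l(\hat{\theta}(\mathbf{X}),\theta) \ge A + (B+\xi^{\beta})/n \big) \le e^{-\xi}$. Then $\mathbb{E}_{\mathbf{X}\sim\mathbf{Q}}[ l(\hat{\theta}(\mathbf{X}),\theta) ] \le A + \big( B + (2+\tfrac{3}{2}\mathbf{K}(\mathbf{Q}\|\mathbf{P}))^{\beta} \big)/n$. -/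

import Mathlib

open MeasureTheory ProbabilityTheory Real Set
open scoped ENNReal NNReal

/-! With `ζ := ((n (l - A) - B)₊)^{1/β}`, the level at which the deviation bound is attained, the
hypothesis reads `P(ζ ≥ ξ) ≤ e^{-ξ}`, so the layer-cake formula gives `E_P e^{2ζ/3} ≤ 3`. The
Donsker–Varadhan inequality `E_Q f ≤ K(Q‖P) + log E_P e^f` with `f = 2ζ/3` then yields
`E_Q ζ ≤ 3/2 K + 3/2 log 3 ≤ 2 + 3/2 K`, and Jensen's inequality for the concave `t ↦ t^β` turns the
pointwise bound `l ≤ A + (B + ζ^β)/n` into the claim. As `l ∘ θhat` need not be measurable, the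
lower integral is approached through the bounded simple functions below it. -/

section

variable {α : Type*} [MeasurableSpace α]

theorem lintegral_le_ofReal_of_forall_bounded_measurable_le {μ : Measure α} [IsFiniteMeasure μ]
    {f : α → ℝ≥0∞} {c : ℝ}
    (h : ∀ m : α → ℝ, Measurable m → (∀ x, 0 ≤ m x) → BddAbove (range m) →
      (∀ x, ENNReal.ofReal (m x) ≤ f x) → ∫ x, m x ∂μ ≤ c) :
    ∫⁻ x, f x ∂μ ≤ ENNReal.ofReal c := by
  rw [lintegral_eq_nnreal]
  refine iSup₂_le fun φ hφ ↦ ?_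
  obtain ⟨M, hM⟩ := φ.exists_forall_le
  have hφ_meas : Measurable fun x ↦ (φ x : ℝ) := φ.measurable.coe_nnreal_real
  have hφ_int : Integrable (fun x ↦ (φ x : ℝ)) μ :=
    .of_bound hφ_meas.aestronglyMeasurable M (ae_of_all _ fun x ↦ by simpa using hM x)
  calc (φ.map ((↑) : ℝ≥0 → ℝ≥0∞)).lintegral μ = ∫⁻ x, ENNReal.ofReal (φ x) ∂μ := by
        rw [← SimpleFunc.lintegral_eq_lintegral]; simp
    _ = ENNReal.ofReal (∫ x, (φ x : ℝ) ∂μ) :=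
        (ofReal_integral_eq_lintegral_ofReal hφ_int (ae_of_all _ fun x ↦ (φ x).2)).symm
    _ ≤ ENNReal.ofReal c := ENNReal.ofReal_le_ofReal <|
        h _ hφ_meas (fun x ↦ (φ x).2) ⟨M, by rintro _ ⟨x, rfl⟩; exact hM x⟩
          (fun x ↦ by simpa using hφ x)

theorem integral_llr_nonneg {μ ν : Measure α} [IsProbabilityMeasure μ] [IsProbabilityMeasure ν]
    (hμν : μ ≪ ν) (h_int : Integrable (llr μ ν) μ) : 0 ≤ ∫ x, llr μ ν x ∂μ := by
  simpa using InformationTheory.integral_llr_add_sub_measure_univ_nonneg hμν h_int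

theorem integral_le_integral_llr_add_log_integral_exp {μ ν : Measure α}
    [IsProbabilityMeasure μ] [IsProbabilityMeasure ν] (hμν : μ ≪ ν)
    (h_int : Integrable (llr μ ν) μ) {f : α → ℝ} (hfμ : Integrable f μ)
    (hfν : Integrable (fun x ↦ exp (f x)) ν) :
    ∫ x, f x ∂μ ≤ ∫ x, llr μ ν x ∂μ + log (∫ x, exp (f x) ∂ν) := by
  have := isProbabilityMeasure_tilted hfν
  have h := integral_llr_nonneg (hμν.trans (absolutelyContinuous_tilted hfν))
    (integrable_llr_tilted_right hμν hfμ h_int hfν)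
  rw [integral_llr_tilted_right hμν hfμ hfν h_int] at h
  linarith

theorem lintegral_exp_div_le_of_tail {P : Measure α} [IsProbabilityMeasure P] {ζ : α → ℝ}
    (hζ : Measurable ζ) {p : ℝ} (hp : 1 < p)
    (htail : ∀ ξ : ℝ, 0 < ξ → P {x | ξ ≤ ζ x} ≤ ENNReal.ofReal (exp (-ξ))) :
    ∫⁻ x, ENNReal.ofReal (exp (ζ x / p)) ∂P ≤ ENNReal.ofReal (p / (p - 1)) := by
  have hp0 : 0 < p := by linarith
  have htail_exp : ∀ t ∈ Ioi (1 : ℝ), P {x | t < exp (ζ x / p)} ≤ ENNReal.ofReal (t ^ (-p)) := by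
    intro t (ht : 1 < t)
    have ht0 : 0 < t := by linarith
    have hsub : {x | t < exp (ζ x / p)} ⊆ {x | p * log t ≤ ζ x} := fun x (hx : t < _) ↦ by
      rw [mem_ofPred_eq, ← le_div_iff₀' hp0]
      exact ((log_lt_iff_lt_exp ht0).2 hx).le
    refine (measure_mono hsub).trans ((htail _ (mul_pos hp0 (log_pos ht))).trans_eq ?_)
    rw [rpow_def_of_pos ht0, mul_neg, mul_comm]
  rw [lintegral_eq_lintegral_meas_lt P (ae_of_all _ fun x ↦ (exp_pos _).le)
      (hζ.div_const p).exp.aemeasurable, ← Ioc_union_Ioi_eq_Ioi zero_le_one,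
    lintegral_union measurableSet_Ioi (Ioc_disjoint_Ioi le_rfl)]
  calc _ ≤ (∫⁻ _ in Ioc (0 : ℝ) 1, 1) + ∫⁻ t in Ioi (1 : ℝ), ENNReal.ofReal (t ^ (-p)) :=
        add_le_add (setLIntegral_mono measurable_const fun _ _ ↦ prob_le_one)
          (setLIntegral_mono (by fun_prop) htail_exp)
    _ = ENNReal.ofReal (p / (p - 1)) := by
        rw [← ofReal_integral_eq_lintegral_ofReal
          (integrableOn_Ioi_rpow_of_lt (by linarith) one_pos)
          (ae_restrict_of_forall_mem measurableSet_Ioi fun t ht ↦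
            rpow_nonneg (zero_lt_one.trans ht).le _),
          integral_Ioi_rpow_of_lt (by linarith) one_pos]
        have hp1 : 0 < p - 1 := by linarith
        rw [one_rpow, setLIntegral_const, one_mul, Real.volume_Ioc, sub_zero,
          ← ENNReal.ofReal_add zero_le_one (by rw [neg_div, ← div_neg]; simpa using hp1.le)]
        congr 1
        field_simp [show -p + 1 ≠ 0 by linarith]
        ring

theorem integral_le_mul_integral_llr_add_of_tail {P Q : Measure α} [IsProbabilityMeasure P]
    [IsProbabilityMeasure Q] (hQP : Q ≪ P) (h_int : Integrable (llr Q P) Q) {ζ : α → ℝ}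
    (hζ : Measurable ζ) (hζQ : Integrable ζ Q) {p : ℝ} (hp : 1 < p)
    (htail : ∀ ξ : ℝ, 0 < ξ → P {x | ξ ≤ ζ x} ≤ ENNReal.ofReal (exp (-ξ))) :
    ∫ x, ζ x ∂Q ≤ p * ∫ x, llr Q P x ∂Q + p * log (p / (p - 1)) := by
  have hp0 : 0 < p := by linarith
  have hmoment := lintegral_exp_div_le_of_tail hζ hp htail
  have hexp_int : Integrable (fun x ↦ exp (ζ x / p)) P :=
    ⟨(hζ.div_const p).exp.aestronglyMeasurable, (hasFiniteIntegral_iff_ofReal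
      (ae_of_all _ fun x ↦ (exp_pos _).le)).2 (hmoment.trans_lt ENNReal.ofReal_lt_top)⟩
  have hexp_le : ∫ x, exp (ζ x / p) ∂P ≤ p / (p - 1) := by
    rwa [← ofReal_integral_eq_lintegral_ofReal hexp_int (ae_of_all _ fun x ↦ (exp_pos _).le),
      ENNReal.ofReal_le_ofReal_iff (div_nonneg hp0.le (by linarith))] at hmoment
  have hdv := integral_le_integral_llr_add_log_integral_exp hQP h_int (hζQ.div_const p) hexp_int
  have hlog := log_le_log (integral_exp_pos hexp_int) hexp_le
  rw [integral_div, div_le_iff₀ hp0] at hdv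
  linarith [mul_le_mul_of_nonneg_left hlog hp0.le]

theorem log_three_le : log 3 ≤ 4 / 3 := by
  rw [log_le_iff_le_exp (by norm_num)]
  linarith [quadratic_le_exp_of_nonneg (by norm_num : (0 : ℝ) ≤ 4 / 3)]

/-- The inverse of `ξ ↦ A + (B + ξ ^ β) / n` on `[0, ∞)`, extended by `0` below `A + B / n`. -/
noncomputable def deviationLevel (n A B β t : ℝ) : ℝ := max (n * (t - A) - B) 0 ^ β⁻¹

section deviationLevel

variable {n A B β : ℝ}

theorem deviationLevel_nonneg (t : ℝ) : 0 ≤ deviationLevel n A B β t :=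
  rpow_nonneg (le_max_right _ _) _

theorem deviationLevel_rpow (hβ : β ≠ 0) (t : ℝ) :
    deviationLevel n A B β t ^ β = max (n * (t - A) - B) 0 :=
  rpow_inv_rpow (le_max_right _ _) hβ

theorem deviationLevel_mono (hn : 0 ≤ n) (hβ : 0 ≤ β) : Monotone (deviationLevel n A B β) :=
  fun _ _ hts ↦ rpow_le_rpow (le_max_right _ _)
    (max_le_max_right _ (by nlinarith)) (inv_nonneg.2 hβ)

theorem continuous_deviationLevel (hβ : 0 ≤ β) : Continuous (deviationLevel n A B β) :=
  (by fun_prop : Continuous fun t ↦ max (n * (t - A) - B) 0).rpow_const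
    fun _ ↦ Or.inr (inv_nonneg.2 hβ)

theorem le_add_div_deviationLevel_rpow (hn : 0 < n) (hβ : β ≠ 0) (t : ℝ) :
    t ≤ A + (B + deviationLevel n A B β t ^ β) / n := by
  rw [deviationLevel_rpow hβ, ← sub_le_iff_le_add', le_div_iff₀ hn]
  linarith [le_max_left (n * (t - A) - B) 0]

theorem add_div_rpow_le_of_le_deviationLevel (hn : 0 < n) (hβ : 0 < β) {ξ t : ℝ} (hξ : 0 < ξ)
    (h : ξ ≤ deviationLevel n A B β t) : A + (B + ξ ^ β) / n ≤ t := by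
  have hξβ := rpow_le_rpow hξ.le h hβ.le
  rw [deviationLevel_rpow hβ.ne'] at hξβ
  have : ξ ^ β ≤ n * (t - A) - B :=
    (le_max_iff.1 hξβ).resolve_right (rpow_pos_of_pos hξ β).not_ge
  rw [← le_sub_iff_add_le', div_le_iff₀ hn]
  linarith

end deviationLevel

theorem integral_le_of_deviation {P Q : Measure α} [IsProbabilityMeasure P]
    [IsProbabilityMeasure Q] (hQP : Q ≪ P) (h_int : Integrable (llr Q P) Q) {m : α → ℝ}
    (hm : Measurable m) (hmQ : Integrable m Q) {M : ℝ} (hM : ∀ x, m x ≤ M) {n A B β : ℝ}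
    (hn : 0 < n) (hβ0 : 0 < β) (hβ1 : β ≤ 1)
    (hdev : ∀ ξ : ℝ, 0 < ξ → P {x | A + (B + ξ ^ β) / n ≤ m x} ≤ ENNReal.ofReal (exp (-ξ))) :
    ∫ x, m x ∂Q ≤ A + (B + (2 + 3 / 2 * ∫ x, llr Q P x ∂Q) ^ β) / n := by
  set K := ∫ x, llr Q P x ∂Q
  set ζ := fun x ↦ deviationLevel n A B β (m x)
  have hζ_nonneg : ∀ x, 0 ≤ ζ x := fun x ↦ deviationLevel_nonneg _
  have hζ_meas : Measurable ζ := (continuous_deviationLevel hβ0.le).measurable.comp hm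
  have hζ_int : Integrable ζ Q :=
    .of_bound hζ_meas.aestronglyMeasurable (deviationLevel n A B β M) (ae_of_all _ fun x ↦ by
      rw [norm_of_nonneg (hζ_nonneg x)]; exact deviationLevel_mono hn.le hβ0.le (hM x))
  have hζβ_int : Integrable (fun x ↦ ζ x ^ β) Q := by
    simp only [ζ, deviationLevel_rpow hβ0.ne']
    exact (((hmQ.sub (integrable_const A)).const_mul n).sub (integrable_const B)).pos_part
  have hζ_tail : ∀ ξ : ℝ, 0 < ξ → P {x | ξ ≤ ζ x} ≤ ENNReal.ofReal (exp (-ξ)) :=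
    fun ξ hξ ↦ (measure_mono fun x hx ↦
      add_div_rpow_le_of_le_deviationLevel hn hβ0 hξ hx).trans (hdev ξ hξ)
  have hζ_mean : ∫ x, ζ x ∂Q ≤ 2 + 3 / 2 * K := by
    have := integral_le_mul_integral_llr_add_of_tail hQP h_int hζ_meas hζ_int
      (by norm_num : (1 : ℝ) < 3 / 2) hζ_tail
    norm_num at this
    linarith [log_three_le]
  have hjensen : ∫ x, ζ x ^ β ∂Q ≤ (∫ x, ζ x ∂Q) ^ β :=
    (concaveOn_rpow hβ0.le hβ1).le_map_integral (continuous_rpow_const hβ0.le).continuousOn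
      isClosed_Ici (ae_of_all _ hζ_nonneg) hζ_int hζβ_int
  have hbound_int : Integrable (fun x ↦ (B + ζ x ^ β) / n) Q :=
    ((integrable_const B).add hζβ_int).div_const n
  calc ∫ x, m x ∂Q ≤ ∫ x, A + (B + ζ x ^ β) / n ∂Q :=
        integral_mono hmQ ((integrable_const A).add hbound_int)
          fun x ↦ le_add_div_deviationLevel_rpow hn hβ0.ne' (m x)
    _ = A + (B + ∫ x, ζ x ^ β ∂Q) / n := by
        rw [integral_add (integrable_const A) hbound_int, integral_div,
          integral_add (integrable_const B) hζβ_int]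
        simp
    _ ≤ A + (B + (2 + 3 / 2 * K) ^ β) / n := by
        gcongr
        exact hjensen.trans (rpow_le_rpow (integral_nonneg hζ_nonneg) hζ_mean hβ0.le)

end

theorem deviation_to_expectation_kl
    {𝒳 Θ : Type*} [MeasurableSpace 𝒳]
    (P Q : Measure 𝒳) [IsProbabilityMeasure P] [IsProbabilityMeasure Q]
    (θhat : 𝒳 → Θ) (θ : Θ) (l : Θ → Θ → ℝ) (hl : ∀ a b, 0 ≤ l a b)
    (n : ℕ) (hn : 0 < n) (A B : ℝ) (β : ℝ) (hβ0 : 0 < β) (hβ1 : β ≤ 1)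
    (hdev : ∀ ξ : ℝ, 0 < ξ →
      P {x | A + (B + ξ ^ β) / n ≤ l (θhat x) θ} ≤ ENNReal.ofReal (Real.exp (-ξ)))
    (hac : Q ≪ P) (hint : Integrable (llr Q P) Q) :
    ∫⁻ x, ENNReal.ofReal (l (θhat x) θ) ∂Q ≤
      ENNReal.ofReal (A + (B + (2 + (3 / 2) * ∫ x, llr Q P x ∂Q) ^ β) / n) := by
  refine lintegral_le_ofReal_of_forall_bounded_measurable_le fun m hm hm_nonneg ⟨M, hM⟩ hml ↦ ?_
  have hM : ∀ x, m x ≤ M := fun x ↦ hM ⟨x, rfl⟩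
  have hml : ∀ x, m x ≤ l (θhat x) θ := fun x ↦ (ENNReal.ofReal_le_ofReal_iff (hl _ _)).1 (hml x)
  have hmQ : Integrable m Q := .of_bound hm.aestronglyMeasurable M
    (ae_of_all _ fun x ↦ by rw [norm_of_nonneg (hm_nonneg x)]; exact hM x)
  exact integral_le_of_deviation hac hint hm hmQ hM (Nat.cast_pos.2 hn) hβ0 hβ1 fun ξ hξ ↦
    (measure_mono fun x (hx : _ ≤ m x) ↦ hx.trans (hml x)).trans (hdev ξ hξ)
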